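/- Writing $u = \tau^{-n/2} e^{-f(x,\tau)}$ with $\tau = |y|^2/(2N)$ and $v = (2N)^{-n/2}|y|^{2-N}u(x,\tau)$ for a positive heat equation solution $u$ on $\mathbb{R}^n$, one has $\frac{\Delta v}{v} = \frac{(n-2)n}{2N\tau} + \frac{2(n-2) f_t}{N} + \frac{2\tau(f_t^2 - f_{tt})}{N}$. -/

import Mathlib

open Real MeasureTheory Filter
open Topology

/-- The Euclidean Laplacian on `ℝⁿ`. -/
noncomputable def lap {n : ℕ} (g : EuclideanSpace ℝ (Fin n) → ℝ)
    (x : EuclideanSpace ℝ (Fin n)) : ℝ :=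
  ∑ i : Fin n, iteratedFDeriv ℝ 2 g x ![EuclideanSpace.single i 1, EuclideanSpace.single i 1]

/-- The Euclidean Laplacian on the product `ℝⁿ × ℝᴺ`. -/
noncomputable def lap2 {n N : ℕ}
    (g : EuclideanSpace ℝ (Fin n) × EuclideanSpace ℝ (Fin N) → ℝ)
    (z : EuclideanSpace ℝ (Fin n) × EuclideanSpace ℝ (Fin N)) : ℝ :=
  (∑ i : Fin n, iteratedFDeriv ℝ 2 g z
      ![(EuclideanSpace.single i 1, 0), (EuclideanSpace.single i 1, 0)]) +
    ∑ j : Fin N, iteratedFDeriv ℝ 2 g z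
      ![((0 : EuclideanSpace ℝ (Fin n)), EuclideanSpace.single j 1),
        ((0 : EuclideanSpace ℝ (Fin n)), EuclideanSpace.single j 1)]

lemma secondDeriv_line {E : Type*} [NormedAddCommGroup E] [NormedSpace ℝ E]
    (g : E → ℝ) (z a : E) (hg : ContDiffAt ℝ 2 g z) :
    iteratedFDeriv ℝ 2 g z ![a, a] =
      deriv (deriv (fun s : ℝ => g (z + s • a))) 0 := by
  have hline : ∀ s : ℝ, HasDerivAt (fun t : ℝ => z + t • a) a s := by
    intro s
    simpa using ((hasDerivAt_id s).smul_const a).const_add z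
  have hev : ∀ᶠ w in 𝓝 z, DifferentiableAt ℝ g w :=
    (hg.eventually (by norm_num)).mono fun w hw => hw.differentiableAt (by norm_num)
  have htend : Filter.Tendsto (fun s : ℝ => z + s • a) (𝓝 0) (𝓝 z) := by
    have hcont : Continuous fun s : ℝ => z + s • a := by continuity
    simpa using hcont.tendsto 0
  have h0 : (deriv (fun t : ℝ => g (z + t • a)))
      =ᶠ[𝓝 (0:ℝ)] fun s => fderiv ℝ g (z + s • a) a := by
    refine (htend.eventually hev).mono fun s hs => ?_
    exact (hs.hasFDerivAt.comp_hasDerivAt s (hline s)).deriv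
  rw [iteratedFDeriv_two_apply]
  have hdf : DifferentiableAt ℝ (fderiv ℝ g) z :=
    (hg.fderiv_right (m := 1) le_rfl).differentiableAt (by norm_num)
  have h1 : HasDerivAt (fun s : ℝ => fderiv ℝ g (z + s • a))
      (fderiv ℝ (fderiv ℝ g) z a) 0 := by
    have hF : HasFDerivAt (fderiv ℝ g) (fderiv ℝ (fderiv ℝ g) z) (z + (0:ℝ) • a) := by
      simpa using hdf.hasFDerivAt
    exact hF.comp_hasDerivAt 0 (hline 0)
  have h2 : HasDerivAt (fun s : ℝ => fderiv ℝ g (z + s • a) a)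
      (fderiv ℝ (fderiv ℝ g) z a a) 0 := by
    exact ((ContinuousLinearMap.apply ℝ ℝ a).hasFDerivAt.comp_hasDerivAt 0 h1)
  rw [h0.deriv_eq, h2.deriv]
  simp

set_option maxHeartbeats 2000000 in
/-- Second form of the almost-harmonicity of `v`: writing `u = τ^(-n/2) e^(-f(x,τ))` with
`τ = |y|²/(2N)` and `v = (2N)^(-n/2) |y|^(2-N) u(x,τ)`, one has
`Δv/v = (n-2)n/(2Nτ) + 2(n-2)fₜ/N + 2τ(fₜ² - fₜₜ)/N`. -/
theorem stmt_13 (n N : ℕ) (hN : 3 ≤ N)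
    (u f : EuclideanSpace ℝ (Fin n) → ℝ → ℝ)
    (hsmooth : ContDiffOn ℝ (⊤ : ℕ∞) (fun p : EuclideanSpace ℝ (Fin n) × ℝ => u p.1 p.2)
      (Set.univ ×ˢ Set.Ioi (0 : ℝ)))
    (hpos : ∀ x t, 0 < t → 0 < u x t)
    (heat : ∀ x t, 0 < t → deriv (u x) t = lap (fun y => u y t) x)
    (hf : ∀ x t, 0 < t → u x t = t ^ (-(n : ℝ) / 2) * Real.exp (-(f x t)))
    (v : EuclideanSpace ℝ (Fin n) × EuclideanSpace ℝ (Fin N) → ℝ)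
    (hv : ∀ x y, v (x, y) =
      (2 * N : ℝ) ^ (-(n : ℝ) / 2) * ‖y‖ ^ (2 - (N : ℝ)) * u x (‖y‖ ^ 2 / (2 * N)))
    (x : EuclideanSpace ℝ (Fin n)) (y : EuclideanSpace ℝ (Fin N)) (hy : y ≠ 0)
    (τ : ℝ) (hτ : τ = ‖y‖ ^ 2 / (2 * N)) :
    lap2 v (x, y) / v (x, y) =
      ((n : ℝ) - 2) * n / (2 * N * τ) + 2 * ((n : ℝ) - 2) * deriv (f x) τ / N +
        2 * τ * ((deriv (f x) τ) ^ 2 - deriv (deriv (f x)) τ) / N := by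
  have Npos : (0:ℝ) < N := by exact_mod_cast lt_of_lt_of_le (by norm_num) hN
  have Nne : (N:ℝ) ≠ 0 := Npos.ne'
  have hq : (0:ℝ) < ‖y‖ ^ 2 := pow_pos (norm_pos_iff.mpr hy) 2
  set q : ℝ := ‖y‖ ^ 2 with hq_def
  have hτpos : 0 < τ := hτ ▸ div_pos hq (by positivity)
  set C : ℝ := (2 * N : ℝ) ^ (-(n : ℝ) / 2) with hC_def
  have hCpos : 0 < C := Real.rpow_pos_of_pos (by positivity) _
  set α : ℝ := (2 - (N:ℝ)) / 2 with hα
  -- rewrite of the rpow of the norm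
  have hrw : ∀ y' : EuclideanSpace ℝ (Fin N), ‖y'‖ ^ (2 - (N : ℝ)) = ((‖y'‖ ^ 2 : ℝ)) ^ α := by
    intro y'
    have h2α : (2 - (N:ℝ)) = (2:ℝ) * α := by rw [hα]; ring
    rw [h2α, Real.rpow_mul (norm_nonneg _), show ((2:ℝ)) = ((2:ℕ):ℝ) by norm_num,
      Real.rpow_natCast]
  have hveq : ∀ (x' : EuclideanSpace ℝ (Fin n)) (y' : EuclideanSpace ℝ (Fin N)),
      v (x', y') = C * (‖y'‖ ^ 2 : ℝ) ^ α * u x' (‖y'‖ ^ 2 / (2 * N)) := by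
    intro x' y'; rw [hv, hrw]
  -- smoothness facts
  have hopen : IsOpen ((Set.univ : Set (EuclideanSpace ℝ (Fin n))) ×ˢ Set.Ioi (0:ℝ)) :=
    isOpen_univ.prod isOpen_Ioi
  have huAt : ∀ (x' : EuclideanSpace ℝ (Fin n)) (t : ℝ), 0 < t →
      ContDiffAt ℝ 3 (fun p : EuclideanSpace ℝ (Fin n) × ℝ => u p.1 p.2) (x', t) :=
    fun x' t ht => (hsmooth.contDiffAt (hopen.mem_nhds ⟨trivial, Set.mem_Ioi.mpr ht⟩)).of_le (WithTop.coe_le_coe.mpr le_top)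
  have hgOn : ContDiffOn ℝ 3 (u x) (Set.Ioi (0:ℝ)) := by
    intro t ht
    have h2 : ContDiffAt ℝ 3 (fun s : ℝ => ((x, s) : EuclideanSpace ℝ (Fin n) × ℝ)) t :=
      contDiffAt_const.prodMk contDiffAt_id
    exact ((huAt x t ht).comp t h2).contDiffWithinAt
  have hg1On : ContDiffOn ℝ 2 (deriv (u x)) (Set.Ioi (0:ℝ)) :=
    hgOn.deriv_of_isOpen isOpen_Ioi (by norm_num)
  have hgd : ∀ t : ℝ, 0 < t → HasDerivAt (u x) (deriv (u x) t) t := fun t ht =>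
    (((hgOn.contDiffAt (Ioi_mem_nhds ht)).differentiableAt (by norm_num))).hasDerivAt
  have hg1d : ∀ t : ℝ, 0 < t → HasDerivAt (deriv (u x)) (deriv (deriv (u x)) t) t := fun t ht =>
    (((hg1On.contDiffAt (Ioi_mem_nhds ht)).differentiableAt (by norm_num))).hasDerivAt
  -- smoothness of v at (x, y)
  have hnormsq : ContDiff ℝ 2 (fun p : EuclideanSpace ℝ (Fin n) × EuclideanSpace ℝ (Fin N) => ‖p.2‖ ^ 2) :=
    (contDiff_norm_sq ℝ).comp contDiff_snd
  have hA : ContDiffAt ℝ 2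
      (fun p : EuclideanSpace ℝ (Fin n) × EuclideanSpace ℝ (Fin N) => (‖p.2‖ ^ 2 : ℝ) ^ α) (x, y) :=
    hnormsq.contDiffAt.rpow_const_of_ne hq.ne'
  have hupart : ContDiffAt ℝ 2
      (fun p : EuclideanSpace ℝ (Fin n) × EuclideanSpace ℝ (Fin N) => u p.1 (‖p.2‖ ^ 2 / (2 * N))) (x, y) := by
    have hinner : ContDiffAt ℝ 2
        (fun p : EuclideanSpace ℝ (Fin n) × EuclideanSpace ℝ (Fin N) => (p.1, ‖p.2‖ ^ 2 / (2 * N)))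
        (x, y) := contDiffAt_fst.prodMk (hnormsq.contDiffAt.div_const _)
    have h3 := (huAt x (‖y‖ ^ 2 / (2 * N)) (div_pos hq (by positivity))).of_le
      (by norm_num : (2 : WithTop ℕ∞) ≤ 3)
    exact h3.comp (x, y) hinner
  have hvC : ContDiffAt ℝ 2 v (x, y) := by
    have hVC : ContDiffAt ℝ 2
        (fun p : EuclideanSpace ℝ (Fin n) × EuclideanSpace ℝ (Fin N) =>
          C * (‖p.2‖ ^ 2 : ℝ) ^ α * u p.1 (‖p.2‖ ^ 2 / (2 * N))) (x, y) :=
      (contDiffAt_const.mul hA).mul hupart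
    refine hVC.congr_of_eventuallyEq (Filter.Eventually.of_forall fun p => ?_)
    obtain ⟨a, b⟩ := p
    exact hveq a b
  have hxC : ContDiffAt ℝ 2 (fun x' => u x' τ) x :=
    ((huAt x τ hτpos).of_le (by norm_num : (2 : WithTop ℕ∞) ≤ 3)).comp x
      (contDiffAt_id.prodMk contDiffAt_const)
  -- the x-part of the Laplacian
  have hX : (∑ i : Fin n, iteratedFDeriv ℝ 2 v (x, y)
      ![(EuclideanSpace.single i 1, 0), (EuclideanSpace.single i 1, 0)])
      = (C * q ^ α) * deriv (u x) τ := by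
    have hXline : ∀ i : Fin n,
        iteratedFDeriv ℝ 2 v (x, y)
          ![(EuclideanSpace.single i 1, 0), (EuclideanSpace.single i 1, 0)]
        = (C * q ^ α) * iteratedFDeriv ℝ 2 (fun x' => u x' τ) x
            ![EuclideanSpace.single i 1, EuclideanSpace.single i 1] := by
      intro i
      rw [secondDeriv_line v _ _ hvC, secondDeriv_line (fun x' => u x' τ) x _ hxC]
      have h1 : (fun s : ℝ => v ((x, y) + s • ((EuclideanSpace.single i 1 : EuclideanSpace ℝ (Fin n)), (0 : EuclideanSpace ℝ (Fin N)))))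
          = fun s : ℝ => (C * q ^ α) * (fun x' => u x' τ) (x + s • EuclideanSpace.single i 1) := by
        funext s
        have hpt : ((x, y) : EuclideanSpace ℝ (Fin n) × EuclideanSpace ℝ (Fin N))
            + s • ((EuclideanSpace.single i 1 : EuclideanSpace ℝ (Fin n)), (0 : EuclideanSpace ℝ (Fin N)))
            = (x + s • EuclideanSpace.single i 1, y) := by
          simp [Prod.ext_iff]
        rw [hpt, hveq, ← hq_def, ← hτ]
      rw [h1]
      have hpull : ∀ (F : ℝ → ℝ) (c : ℝ), deriv (deriv (fun s => c * F s)) 0 = c * deriv (deriv F) 0 := by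
        intro F c
        have h : deriv (fun s => c * F s) = fun s => c * deriv F s :=
          funext fun s => deriv_const_mul_field c
        rw [h, deriv_const_mul_field]
      exact hpull _ _
    rw [Finset.sum_congr rfl (fun i _ => hXline i), ← Finset.mul_sum, heat x τ hτpos, lap]
  -- radial function machinery
  set H : ℝ → ℝ := fun w => C * (w ^ α * u x (w / (2 * N))) with hH_def
  set H1 : ℝ → ℝ := fun w =>
    C * (α * w ^ (α - 1) * u x (w / (2 * N)) + w ^ α * deriv (u x) (w / (2 * N)) / (2 * N))
    with hH1_def
  set H2 : ℝ → ℝ := fun w =>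
    C * (α * (α - 1) * w ^ (α - 2) * u x (w / (2 * N))
      + 2 * α * w ^ (α - 1) * deriv (u x) (w / (2 * N)) / (2 * N)
      + w ^ α * deriv (deriv (u x)) (w / (2 * N)) / ((2 * N) * (2 * N))) with hH2_def
  have hH1val : ∀ w : ℝ, H1 w =
      C * (α * w ^ (α - 1) * u x (w / (2 * N)) + w ^ α * deriv (u x) (w / (2 * N)) / (2 * N)) :=
    fun w => rfl
  have hH2val : ∀ w : ℝ, H2 w =
      C * (α * (α - 1) * w ^ (α - 2) * u x (w / (2 * N))
      + 2 * α * w ^ (α - 1) * deriv (u x) (w / (2 * N)) / (2 * N)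
      + w ^ α * deriv (deriv (u x)) (w / (2 * N)) / ((2 * N) * (2 * N))) := fun w => rfl
  have hw2pos : ∀ w : ℝ, 0 < w → 0 < w / (2 * N) := fun w hw => div_pos hw (by positivity)
  have hinner : ∀ w : ℝ, HasDerivAt (fun w : ℝ => w / (2 * N)) (1 / (2 * N)) w :=
    fun w => (hasDerivAt_id w).div_const _
  have hHd : ∀ w : ℝ, 0 < w → HasDerivAt H (H1 w) w := by
    intro w hw
    have hcomp := (hgd _ (hw2pos w hw)).comp w (hinner w)
    have hr : HasDerivAt (fun w : ℝ => w ^ α) (α * w ^ (α - 1)) w :=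
      Real.hasDerivAt_rpow_const (Or.inl hw.ne')
    have hmul := (hr.mul hcomp).const_mul C
    have hval : H1 w = C * (α * w ^ (α - 1) * u x (w / (2 * N))
        + w ^ α * (deriv (u x) (w / (2 * N)) * (1 / (2 * N)))) := by
      rw [hH1val w]; ring
    rw [hval]
    exact hmul
  have hH1d : ∀ w : ℝ, 0 < w → HasDerivAt H1 (H2 w) w := by
    intro w hw
    have hcomp := (hgd _ (hw2pos w hw)).comp w (hinner w)
    have hcomp1 := (hg1d _ (hw2pos w hw)).comp w (hinner w)
    have hr : HasDerivAt (fun w : ℝ => w ^ α) (α * w ^ (α - 1)) w :=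
      Real.hasDerivAt_rpow_const (Or.inl hw.ne')
    have hr1 : HasDerivAt (fun w : ℝ => w ^ (α - 1)) ((α - 1) * w ^ (α - 1 - 1)) w :=
      Real.hasDerivAt_rpow_const (Or.inl hw.ne')
    have ht1 := (hr1.const_mul α).mul hcomp
    have ht2 := (hr.mul hcomp1).div_const (2 * N)
    have hsum := (ht1.add ht2).const_mul C
    have hval : H2 w = C * (α * ((α - 1) * w ^ (α - 1 - 1)) * u x (w / (2 * N))
        + α * w ^ (α - 1) * (deriv (u x) (w / (2 * N)) * (1 / (2 * N)))
        + (α * w ^ (α - 1) * deriv (u x) (w / (2 * N))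
          + w ^ α * (deriv (deriv (u x)) (w / (2 * N)) * (1 / (2 * N)))) / (2 * N)) := by
      rw [hH2val w, show α - 1 - 1 = α - 2 by ring]
      ring
    rw [hval]
    exact hsum
  -- the y-part, direction by direction
  have hYline : ∀ j : Fin N,
      iteratedFDeriv ℝ 2 v (x, y)
        ![((0 : EuclideanSpace ℝ (Fin n)), EuclideanSpace.single j 1),
          ((0 : EuclideanSpace ℝ (Fin n)), EuclideanSpace.single j 1)]
      = H2 q * (2 * y j) ^ 2 + H1 q * 2 := by
    intro j
    rw [secondDeriv_line v _ _ hvC]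
    set c : ℝ := y j with hc_def
    set P : ℝ → ℝ := fun s => q + 2 * c * s + s ^ 2 with hP_def
    have hPval : ∀ s : ℝ, P s = q + 2 * c * s + s ^ 2 := fun s => rfl
    have hPd : ∀ s : ℝ, HasDerivAt P (2 * c + 2 * s) s := by
      intro s
      have h1 := (((hasDerivAt_id s).const_mul (2 * c)).const_add q).add (hasDerivAt_pow 2 s)
      simp at h1
      exact h1
    have hP0 : P 0 = q := by rw [hPval]; ring
    have hnorm : ∀ s : ℝ, ‖y + s • EuclideanSpace.single j (1:ℝ)‖ ^ 2 = P s := by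
      intro s
      rw [hPval, norm_add_sq_real, hq_def]
      have h1 : (inner ℝ y (s • EuclideanSpace.single j (1:ℝ)) : ℝ) = s * c := by
        rw [real_inner_smul_right, EuclideanSpace.inner_single_right]
        simp [hc_def]
      have h2 : ‖s • EuclideanSpace.single j (1:ℝ)‖ ^ 2 = s ^ 2 := by
        rw [norm_smul]
        simp [EuclideanSpace.norm_single, mul_pow, sq_abs]
      rw [h1, h2]
      ring
    have hfun : (fun s : ℝ => v ((x, y) + s • ((0 : EuclideanSpace ℝ (Fin n)), EuclideanSpace.single j 1)))
        = fun s : ℝ => H (P s) := by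
      funext s
      have hpt : ((x, y) : EuclideanSpace ℝ (Fin n) × EuclideanSpace ℝ (Fin N))
          + s • ((0 : EuclideanSpace ℝ (Fin n)), EuclideanSpace.single j 1)
          = (x, y + s • EuclideanSpace.single j 1) := by
        simp [Prod.ext_iff]
      rw [hpt, hveq, hnorm, hH_def]
      ring
    rw [hfun]
    have hPev : ∀ᶠ s in 𝓝 (0:ℝ), 0 < P s := by
      have hcont : Continuous P :=
        (continuous_const.add (continuous_const.mul continuous_id)).add (continuous_pow 2)
      exact (hcont.tendsto' 0 q hP0).eventually (eventually_gt_nhds hq)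
    have hd1 : deriv (fun s : ℝ => H (P s)) =ᶠ[𝓝 (0:ℝ)] fun s => H1 (P s) * (2 * c + 2 * s) :=
      hPev.mono fun s hs => ((hHd _ hs).comp s (hPd s)).deriv
    rw [hd1.deriv_eq]
    have ha : HasDerivAt (fun s : ℝ => H1 (P s)) (H2 (P 0) * (2 * c + 2 * 0)) 0 :=
      (hH1d _ (hP0 ▸ hq)).comp 0 (hPd 0)
    have hb : HasDerivAt (fun s : ℝ => 2 * c + 2 * s) 2 0 := by
      simpa using ((hasDerivAt_id (0:ℝ)).const_mul 2).const_add (2 * c)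
    have h2 := ha.mul hb
    rw [show deriv (fun s => H1 (P s) * (2 * c + 2 * s)) 0 = _ from h2.deriv, hP0]
    ring
  have hsumsq : ∑ j : Fin N, (y j) ^ 2 = q := by
    rw [hq_def, EuclideanSpace.norm_eq, Real.sq_sqrt (by positivity)]
    simp [Real.norm_eq_abs, sq_abs]
  have hY : (∑ j : Fin N, iteratedFDeriv ℝ 2 v (x, y)
      ![((0 : EuclideanSpace ℝ (Fin n)), EuclideanSpace.single j 1),
        ((0 : EuclideanSpace ℝ (Fin n)), EuclideanSpace.single j 1)])
      = H2 q * (4 * q) + H1 q * (2 * N) := by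
    rw [Finset.sum_congr rfl (fun j _ => hYline j), Finset.sum_add_distrib]
    congr 1
    · have h1 : ∀ j : Fin N, H2 q * (2 * y j) ^ 2 = H2 q * 4 * (y j) ^ 2 := fun j => by ring
      rw [Finset.sum_congr rfl (fun j _ => h1 j), ← Finset.mul_sum, hsumsq]
      ring
    · rw [Finset.sum_const, Finset.card_univ]
      simp [nsmul_eq_mul]
      ring
  have hlap2 : lap2 v (x, y) = C * q ^ α * deriv (u x) τ + (H2 q * (4 * q) + H1 q * (2 * N)) := by
    rw [lap2, hX, hY]
  have hvxy : v (x, y) = C * q ^ α * u x τ := by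
    rw [hveq, ← hq_def, ← hτ]
  -- derivatives of f
  have hflog : ∀ t : ℝ, 0 < t → f x t = -Real.log (u x t) - (n:ℝ)/2 * Real.log t := by
    intro t ht
    have h1 : u x t * t ^ ((n:ℝ)/2) = Real.exp (-f x t) := by
      rw [hf x t ht, mul_comm (t ^ (-(n:ℝ)/2)), mul_assoc, ← Real.rpow_add ht,
        show -(n:ℝ)/2 + (n:ℝ)/2 = 0 by ring, Real.rpow_zero, mul_one]
    have h2 := congrArg Real.log h1
    rw [Real.log_exp, Real.log_mul (hpos x t ht).ne' (Real.rpow_pos_of_pos ht _).ne',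
      Real.log_rpow ht] at h2
    linarith
  have hfd1 : ∀ t : ℝ, 0 < t → HasDerivAt (f x)
      (-(deriv (u x) t / u x t) - (n:ℝ)/2 * t⁻¹) t := by
    intro t ht
    have hev : f x =ᶠ[𝓝 t] fun t => -Real.log (u x t) - (n:ℝ)/2 * Real.log t :=
      eventually_of_mem (Ioi_mem_nhds ht) (fun r hr => hflog r hr)
    have ha := ((hgd t ht).log (hpos x t ht).ne').neg
    have hb := (Real.hasDerivAt_log ht.ne').const_mul ((n:ℝ)/2)
    exact (ha.sub hb).congr_of_eventuallyEq hev
  have hderiv_f : ∀ t : ℝ, 0 < t → deriv (f x) t = -(deriv (u x) t / u x t) - (n:ℝ)/2 * t⁻¹ :=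
    fun t ht => (hfd1 t ht).deriv
  have hfd2 : deriv (deriv (f x)) τ =
      -((deriv (deriv (u x)) τ * u x τ - deriv (u x) τ * deriv (u x) τ) / (u x τ) ^ 2)
        - (n:ℝ)/2 * (-(τ^2)⁻¹) := by
    have hev : deriv (f x) =ᶠ[𝓝 τ] fun t => -(deriv (u x) t / u x t) - (n:ℝ)/2 * t⁻¹ :=
      eventually_of_mem (Ioi_mem_nhds hτpos) (fun r hr => hderiv_f r hr)
    rw [hev.deriv_eq]
    have ha := (((hg1d τ hτpos).div (hgd τ hτpos) (hpos x τ hτpos).ne').neg).sub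
      ((hasDerivAt_inv hτpos.ne').const_mul ((n:ℝ)/2))
    exact ha.deriv
  -- final algebra
  rw [hlap2, hvxy, hderiv_f τ hτpos, hfd2, hH1val q, hH2val q, ← hτ, hα]
  have e1 : q ^ ((2-(N:ℝ))/2 - 1) = q ^ ((2-(N:ℝ))/2) / q := by
    rw [Real.rpow_sub hq, Real.rpow_one]
  have e2 : q ^ ((2-(N:ℝ))/2 - 2) = q ^ ((2-(N:ℝ))/2) / q ^ 2 := by
    rw [show ((2-(N:ℝ))/2 - 2) = ((2-(N:ℝ))/2 - ((2:ℕ):ℝ)) by norm_num, Real.rpow_sub hq,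
      Real.rpow_natCast]
  rw [e1, e2]
  have hq2N : q = 2 * N * τ := by rw [hτ]; field_simp
  rw [hq2N]
  have hApos : (0:ℝ) < (2*(N:ℝ)*τ) ^ ((2-(N:ℝ))/2) := Real.rpow_pos_of_pos (by positivity) _
  have hG : u x τ ≠ 0 := (hpos x τ hτpos).ne'
  field_simp
  ring
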